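/- For all integers n ≥ 1 and all k ≥ 0, the coefficients Q_{j,k,m} satisfy the recursions Q_{0,k,2n+2} = (n+k+1)·Q_{0,k,2n+1} + (n−k+2)·Q_{0,k−1,2n+1} + Q_{1,k−1,2n+1} and Q_{1,k,2n+2} = (n+k+1)·Q_{1,k,2n+1} + (n−k+1)·Q_{1,k−1,2n+1}, where by convention Q_{j,−1,m} = 0. (These express Q_{2n+2}(x,z) = Ψ_{2n+1}(Q_{2n+1}(x,z)).) -/

import Mathlib

namespace DescentParity

/-- Number of descent positions i (1-indexed adjacent pairs) of a permutation of {1,…,m}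
    whose first (larger) entry is even. Entries of `Fin m` represent values via `(·:ℕ)+1`. -/
def desBegE (m : ℕ) (σ : Equiv.Perm (Fin m)) : ℕ :=
  (Finset.univ.filter (fun p : Fin m × Fin m =>
    (p.2 : ℕ) = (p.1 : ℕ) + 1 ∧ σ p.2 < σ p.1 ∧ Even ((σ p.1 : ℕ) + 1))).card

def desEndE (m : ℕ) (σ : Equiv.Perm (Fin m)) : ℕ :=
  (Finset.univ.filter (fun p : Fin m × Fin m =>
    (p.2 : ℕ) = (p.1 : ℕ) + 1 ∧ σ p.2 < σ p.1 ∧ Even ((σ p.2 : ℕ) + 1))).card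

def desBegO (m : ℕ) (σ : Equiv.Perm (Fin m)) : ℕ :=
  (Finset.univ.filter (fun p : Fin m × Fin m =>
    (p.2 : ℕ) = (p.1 : ℕ) + 1 ∧ σ p.2 < σ p.1 ∧ Odd ((σ p.1 : ℕ) + 1))).card

def desEndO (m : ℕ) (σ : Equiv.Perm (Fin m)) : ℕ :=
  (Finset.univ.filter (fun p : Fin m × Fin m =>
    (p.2 : ℕ) = (p.1 : ℕ) + 1 ∧ σ p.2 < σ p.1 ∧ Odd ((σ p.2 : ℕ) + 1))).card

/-- The first entry σ₁ of the permutation is even. -/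
def firstEven (m : ℕ) (σ : Equiv.Perm (Fin m)) : Prop :=
  ∃ i : Fin m, (i : ℕ) = 0 ∧ Even ((σ i : ℕ) + 1)

def firstOdd (m : ℕ) (σ : Equiv.Perm (Fin m)) : Prop :=
  ∃ i : Fin m, (i : ℕ) = 0 ∧ Odd ((σ i : ℕ) + 1)

instance (m : ℕ) (σ : Equiv.Perm (Fin m)) : Decidable (firstEven m σ) := by
  unfold firstEven; infer_instance

instance (m : ℕ) (σ : Equiv.Perm (Fin m)) : Decidable (firstOdd m σ) := by
  unfold firstOdd; infer_instance

def R (k m : ℕ) : ℕ :=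
  (Finset.univ.filter (fun σ : Equiv.Perm (Fin m) => desBegE m σ = k)).card

def M (k m : ℕ) : ℕ :=
  (Finset.univ.filter (fun σ : Equiv.Perm (Fin m) => desBegO m σ = k)).card

def P0 (k m : ℕ) : ℕ :=
  (Finset.univ.filter (fun σ : Equiv.Perm (Fin m) => firstOdd m σ ∧ desEndE m σ = k)).card

def P1 (k m : ℕ) : ℕ :=
  (Finset.univ.filter (fun σ : Equiv.Perm (Fin m) => firstEven m σ ∧ desEndE m σ = k)).card

def Q0 (k m : ℕ) : ℕ :=
  (Finset.univ.filter (fun σ : Equiv.Perm (Fin m) => firstEven m σ ∧ desEndO m σ = k)).card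

def Q1 (k m : ℕ) : ℕ :=
  (Finset.univ.filter (fun σ : Equiv.Perm (Fin m) => firstOdd m σ ∧ desEndO m σ = k)).card

/-! Every permutation of `{1, …, 2n+2}` arises exactly once by inserting the even maximum `2n+2`
into a permutation `τ` of `{1, …, 2n+1}`. Inserting it just before an entry `b` creates the
descent `(2n+2, b)` and breaks the pair `(a, b)` with the preceding entry `a`, so the number of
descents with odd bottom goes up by one exactly when `b` is odd and not itself a descent bottom,
and is unchanged otherwise. Since `τ` has `n + 1` odd entries, if `k` of them are descent bottoms
then `n + 1 - k` of the `2n+2` slots raise the count and `n + 1 + k` keep it. The first entry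
changes (to the even `2n+2`) only when inserting in front. -/

open Finset Equiv

theorem _root_.List.ofFn_insertNth {α : Type*} {m : ℕ} (p : Fin (m + 1)) (x : α)
    (f : Fin m → α) :
    List.ofFn (Fin.insertNth p x f) = (List.ofFn f).insertIdx p x := by
  induction m with
  | zero => rw [Fin.fin_one_eq_zero p]; simp [Fin.insertNth_zero']
  | succ m ih =>
    cases p using Fin.cases with
    | zero => simp [Fin.insertNth_zero']
    | succ q =>
      rw [← Fin.cons_self_tail f, Fin.insertNth_succ_cons, List.ofFn_cons, List.ofFn_cons, ih]
      rfl

theorem countP_odd_range' (n : ℕ) : (List.range' 1 (2 * n + 1)).countP (Odd ·) = n + 1 := by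
  induction n with
  | zero => simp
  | succ n ih =>
    rw [show 2 * (n + 1) + 1 = (2 * n + 1) + 2 by ring, ← List.range'_append_1,
      List.countP_append, ih]
    simp [List.range'_succ, Nat.odd_add, parity_simps]

theorem card_filter_fin_eq_card_filter_range (N : ℕ) (P : ℕ → Prop) [DecidablePred P] :
    #{p : Fin N | P p} = #{i ∈ range N | P i} := by
  simp only [card_filter]
  exact Fin.sum_univ_eq_sum_range (fun i => if P i then 1 else 0) N

theorem card_filter_add_ite_mem_eq {α : Type*} [DecidableEq α] (s S : Finset α) (d k : ℕ) :
    (#{x ∈ s | d + (if x ∈ S then 1 else 0) = k} : ℤ)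
      = (if d = k then (#(s \ S) : ℤ) else 0)
        + (if d + 1 = k then (#(s ∩ S) : ℤ) else 0) := by
  rw [← filter_notMem_eq_sdiff, ← filter_mem_eq_inter]
  by_cases hd : d = k
  · rw [if_pos hd, if_neg (by omega), add_zero]
    congr 2
    exact filter_congr fun x _ => by split_ifs with h <;> simp [h, hd]
  · rw [if_neg hd, zero_add]
    split_ifs with hd'
    · congr 2
      exact filter_congr fun x _ => by split_ifs with h <;> simp [h] <;> omega
    · rw [Nat.cast_eq_zero, card_eq_zero, filter_eq_empty_iff]
      intro x _
      split_ifs <;> omega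

theorem card_filter_and_add_one_eq {α : Type*} [Fintype α] (P : α → Prop) [DecidablePred P]
    (f : α → ℕ) (k : ℕ) :
    #{x | P x ∧ f x + 1 = k} = if k = 0 then 0 else #{x | P x ∧ f x = k - 1} := by
  split_ifs with hk
  · simp [hk]
  · congr 1
    exact filter_congr fun x _ => and_congr_right fun _ => by omega

theorem sum_ite_eq_mul_card {α : Type*} [Fintype α] (P : α → Prop) [DecidablePred P]
    (c : ℤ) :
    ∑ x, (if P x then c else 0) = c * #{x | P x} := by
  rw [← sum_filter, sum_const, nsmul_eq_mul, mul_comm]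

/-! The statistics of a word `a :: l`; with `a = 0` they are those of `l`, whose entries are
positive. -/

def oddDescents (a : ℕ) : List ℕ → ℕ
  | [] => 0
  | b :: l => (if b < a ∧ Odd b then 1 else 0) + oddDescents b l

def oddAscents (a : ℕ) : List ℕ → ℕ
  | [] => 0
  | b :: l => (if a < b ∧ Odd b then 1 else 0) + oddAscents b l

/-- The pair of `a :: l` ending at `l[p]` is an ascent to an odd entry. -/
def IsOddAscentAt (a : ℕ) : List ℕ → ℕ → Prop
  | [], _ => False
  | b :: _, 0 => a < b ∧ Odd b
  | b :: l, p + 1 => IsOddAscentAt b l p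

instance decidableIsOddAscentAt :
    (a : ℕ) → (l : List ℕ) → (p : ℕ) → Decidable (IsOddAscentAt a l p)
  | _, [], _ => isFalse (by simp [IsOddAscentAt])
  | a, b :: _, 0 => inferInstanceAs (Decidable (a < b ∧ Odd b))
  | _, b :: l, _ + 1 => decidableIsOddAscentAt b l _

theorem oddDescents_insertIdx {M : ℕ} (hM : Even M) {a : ℕ} {l : List ℕ}
    (hlt : ∀ x ∈ l, x < M) (hnd : (a :: l).Nodup) (p : ℕ) :
    oddDescents a (l.insertIdx p M)
      = oddDescents a l + if IsOddAscentAt a l p then 1 else 0 := by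
  induction l generalizing a p with
  | nil => cases p <;> simp [oddDescents, IsOddAscentAt, Nat.not_odd_iff_even.2 hM]
  | cons b l ih =>
    have hMb : b < M := hlt b (by simp)
    have hab : a ≠ b := fun h => by simp [h] at hnd
    cases p with
    | zero =>
      simp only [List.insertIdx_zero, oddDescents, IsOddAscentAt, Nat.not_odd_iff_even.2 hM,
        and_false, if_false, hMb, true_and, zero_add]
      rcases hab.lt_or_gt with h | h <;> simp [h, h.not_gt, add_comm]
    | succ p =>
      simp only [List.insertIdx_succ_cons, oddDescents, IsOddAscentAt,
        ih (fun x hx => hlt x (by simp [hx])) (List.nodup_cons.1 hnd).2 p, add_assoc]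

theorem card_isOddAscentAt (a : ℕ) (l : List ℕ) :
    #{p ∈ range (l.length + 1) | IsOddAscentAt a l p} = oddAscents a l := by
  induction l generalizing a with
  | nil => simp [IsOddAscentAt, oddAscents]
  | cons b l ih =>
    rw [List.length_cons, card_filter, sum_range_succ', oddAscents, ← ih b, card_filter, add_comm]
    simp only [IsOddAscentAt]
    congr 1

theorem oddDescents_add_oddAscents {a : ℕ} {l : List ℕ} (hnd : (a :: l).Nodup) :
    oddDescents a l + oddAscents a l = l.countP (Odd ·) := by
  induction l generalizing a with
  | nil => rfl
  | cons b l ih =>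
    have hab : a ≠ b := fun h => by simp [h] at hnd
    rw [oddDescents, oddAscents, List.countP_cons, ← ih (List.nodup_cons.1 hnd).2]
    rcases hab.lt_or_gt with h | h <;> by_cases hb : Odd b <;> simp [h, h.not_gt, hb] <;> omega

def oneLine {m : ℕ} (σ : Perm (Fin m)) : List ℕ := List.ofFn fun i => (σ i : ℕ) + 1

section oneLine

variable {m : ℕ}

theorem nodup_zero_cons_oneLine (σ : Perm (Fin m)) : (0 :: oneLine σ).Nodup := by
  refine List.nodup_cons.2 ⟨by simp [oneLine], List.nodup_ofFn.2 fun i j h => σ.injective ?_⟩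
  exact Fin.ext (by simpa using h)

theorem lt_of_mem_oneLine {σ : Perm (Fin m)} {x : ℕ} (hx : x ∈ oneLine σ) : x < m + 1 := by
  obtain ⟨i, rfl⟩ := List.mem_ofFn.1 hx
  simp

theorem countP_odd_oneLine (n : ℕ) (σ : Perm (Fin (2 * n + 1))) :
    (oneLine σ).countP (Odd ·) = n + 1 := by
  have hid : List.ofFn (fun i : Fin (2 * n + 1) => (i : ℕ) + 1) = List.range' 1 (2 * n + 1) := by
    simp [List.ofFn_eq_map, List.range'_eq_map_range, ← List.map_coe_finRange_eq_range, add_comm]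
  rw [← countP_odd_range' n, ← hid]
  exact (Equiv.Perm.ofFn_comp_perm σ fun i => (i : ℕ) + 1).countP_eq _

theorem card_oddDescentPairs (f : Fin (m + 1) → ℕ) :
    #{q : Fin (m + 1) × Fin (m + 1) | (q.2 : ℕ) = q.1 + 1 ∧ f q.2 < f q.1 ∧ Odd (f q.2)}
      = oddDescents (f 0) (List.ofFn fun i => f i.succ) := by
  induction m with
  | zero => simp [oddDescents]
  | succ m ih =>
    rw [List.ofFn_succ, oddDescents, ← ih (fun i => f i.succ), card_filter, card_filter,
      Fintype.sum_prod_type, Fintype.sum_prod_type, Fin.sum_univ_succ]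
    congr 1
    · rw [Fintype.sum_eq_single 1 fun j hj => if_neg fun h => hj (Fin.ext (by simpa using h.1))]
      exact if_congr (by simp) rfl rfl
    · refine Fintype.sum_congr _ _ fun i => ?_
      rw [Fin.sum_univ_succ, if_neg (by simp)]
      simp

theorem desEndO_eq_oddDescents (σ : Perm (Fin m)) :
    desEndO m σ = oddDescents 0 (oneLine σ) := by
  cases m with
  | zero => simp [desEndO, oneLine, oddDescents]
  | succ m =>
    rw [oneLine, List.ofFn_succ, oddDescents,
      ← card_oddDescentPairs (fun i => (σ i : ℕ) + 1), desEndO]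
    simp

theorem firstOdd_iff (σ : Perm (Fin (m + 1))) :
    firstOdd (m + 1) σ ↔ Odd ((σ 0 : ℕ) + 1) := by
  simp [firstOdd]

theorem firstEven_iff_not_firstOdd (σ : Perm (Fin (m + 1))) :
    firstEven (m + 1) σ ↔ ¬firstOdd (m + 1) σ := by
  simp [firstEven, firstOdd_iff]

end oneLine

def insertMax {m : ℕ} (τ : Perm (Fin m)) (p : Fin (m + 1)) : Perm (Fin (m + 1)) :=
  (finSuccEquiv' p).trans ((Equiv.optionCongr τ).trans (finSuccEquiv' (Fin.last m)).symm)

section insertMax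

variable {m : ℕ} (τ : Perm (Fin m)) (p : Fin (m + 1))

@[simp] theorem insertMax_apply_self : insertMax τ p p = Fin.last m := by
  simp [insertMax]

@[simp] theorem insertMax_apply_succAbove (j : Fin m) :
    insertMax τ p (p.succAbove j) = (τ j).castSucc := by
  simp [insertMax, Fin.succAbove_last]

theorem insertMax_injective :
    Function.Injective fun x : Perm (Fin m) × Fin (m + 1) => insertMax x.1 x.2 := by
  rintro ⟨τ, p⟩ ⟨τ', p'⟩ h
  simp only at h
  obtain rfl : p = p' := (insertMax τ' p').injective <| by
    rw [insertMax_apply_self, ← h, insertMax_apply_self]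
  obtain rfl : τ = τ' := Equiv.ext fun j => Fin.castSucc_injective m <| by
    rw [← insertMax_apply_succAbove τ p, ← insertMax_apply_succAbove τ' p, h]
  rfl

theorem insertMax_bijective :
    Function.Bijective fun x : Perm (Fin m) × Fin (m + 1) => insertMax x.1 x.2 := by
  rw [Fintype.bijective_iff_injective_and_card]
  refine ⟨insertMax_injective, ?_⟩
  simp [Fintype.card_perm, Nat.factorial_succ, mul_comm]

theorem card_filter_perm_succ (P : Perm (Fin (m + 1)) → Prop) [DecidablePred P] :
    #{σ | P σ} = ∑ τ : Perm (Fin m), #{p | P (insertMax τ p)} := by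
  simp only [card_filter]
  rw [← (Equiv.ofBijective _ insertMax_bijective).sum_comp, Fintype.sum_prod_type]
  rfl

theorem oneLine_insertMax : oneLine (insertMax τ p) = (oneLine τ).insertIdx p (m + 1) := by
  rw [oneLine, oneLine, ← List.ofFn_insertNth]
  congr 1
  rw [Fin.eq_insertNth_iff]
  refine ⟨by simp, funext fun j => ?_⟩
  simp [Fin.removeNth]

theorem firstOdd_insertMax (hm : Odd m) :
    firstOdd (m + 1) (insertMax τ p) ↔ p ≠ 0 ∧ firstOdd m τ := by
  obtain ⟨m, rfl⟩ : ∃ m', m = m' + 1 := ⟨m - 1, by have := hm.pos; omega⟩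
  rw [firstOdd_iff, firstOdd_iff]
  by_cases hp : p = 0
  · subst hp
    simp [← Nat.not_even_iff_odd, hm.add_one]
  · rw [← Fin.succAbove_ne_zero_zero hp, insertMax_apply_succAbove]
    simp [hp]

end insertMax

def oddAscentSlots {m : ℕ} (τ : Perm (Fin m)) : Finset (Fin (m + 1)) :=
  {p | IsOddAscentAt 0 (oneLine τ) p}

theorem zero_mem_oddAscentSlots {m : ℕ} (τ : Perm (Fin (m + 1))) :
    0 ∈ oddAscentSlots τ ↔ firstOdd (m + 1) τ := by
  simp [oddAscentSlots, oneLine, List.ofFn_succ, IsOddAscentAt, firstOdd_iff]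

section fibres

variable {n : ℕ} (τ : Perm (Fin (2 * n + 1))) (k : ℕ)

theorem desEndO_insertMax (p : Fin (2 * n + 2)) :
    desEndO (2 * n + 2) (insertMax τ p)
      = desEndO (2 * n + 1) τ + if p ∈ oddAscentSlots τ then 1 else 0 := by
  rw [desEndO_eq_oddDescents, desEndO_eq_oddDescents, oneLine_insertMax]
  simpa [oddAscentSlots] using oddDescents_insertIdx ⟨n + 1, by ring⟩
    (fun x hx => lt_of_mem_oneLine hx) (nodup_zero_cons_oneLine τ) p

theorem card_oddAscentSlots_add_desEndO :
    #(oddAscentSlots τ) + desEndO (2 * n + 1) τ = n + 1 := by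
  have hlen : (oneLine τ).length + 1 = 2 * n + 2 := by simp [oneLine]
  rw [oddAscentSlots, card_filter_fin_eq_card_filter_range, ← hlen, card_isOddAscentAt,
    desEndO_eq_oddDescents, add_comm, oddDescents_add_oddAscents (nodup_zero_cons_oneLine τ),
    countP_odd_oneLine]

theorem card_firstOdd_insertMax :
    (#{p : Fin (2 * n + 2) | firstOdd (2 * n + 2) (insertMax τ p)
        ∧ desEndO (2 * n + 2) (insertMax τ p) = k} : ℤ)
      = (if firstOdd (2 * n + 1) τ ∧ desEndO (2 * n + 1) τ = k then (n + 1 + k : ℤ) else 0)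
        + (if firstOdd (2 * n + 1) τ ∧ desEndO (2 * n + 1) τ + 1 = k then (n + 1 - k : ℤ)
          else 0) := by
  have hc := card_oddAscentSlots_add_desEndO τ
  by_cases hτ : firstOdd (2 * n + 1) τ
  · have h0 := (zero_mem_oddAscentSlots τ).2 hτ
    have hfib : ({p | firstOdd (2 * n + 2) (insertMax τ p)
        ∧ desEndO (2 * n + 2) (insertMax τ p) = k} : Finset (Fin (2 * n + 2)))
        = {p ∈ (univ.erase 0 : Finset (Fin (2 * n + 2))) | desEndO (2 * n + 1) τ
            + (if p ∈ oddAscentSlots τ then 1 else 0) = k} := by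
      ext p
      simp [firstOdd_insertMax (hm := odd_two_mul_add_one n), desEndO_insertMax, hτ]
    rw [hfib, card_filter_add_ite_mem_eq, erase_sdiff_comm, erase_eq_of_notMem (by simp [h0]),
      ← compl_eq_univ_sdiff, card_compl, erase_inter, univ_inter, card_erase_of_mem h0]
    simp only [hτ, true_and, Fintype.card_fin]
    have := card_pos.2 ⟨0, h0⟩
    split_ifs <;> push_cast [*] <;> omega
  · rw [if_neg (fun h => hτ h.1), if_neg (fun h => hτ h.1), add_zero, Nat.cast_eq_zero,
      card_eq_zero, filter_eq_empty_iff]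
    exact fun p _ h => hτ ((firstOdd_insertMax τ p (odd_two_mul_add_one n)).1 h.1).2

theorem card_firstEven_insertMax :
    (#{p : Fin (2 * n + 2) | firstEven (2 * n + 2) (insertMax τ p)
        ∧ desEndO (2 * n + 2) (insertMax τ p) = k} : ℤ)
      = (if firstEven (2 * n + 1) τ ∧ desEndO (2 * n + 1) τ = k then (n + 1 + k : ℤ) else 0)
        + (if firstEven (2 * n + 1) τ ∧ desEndO (2 * n + 1) τ + 1 = k then (n + 2 - k : ℤ)
          else 0)
        + (if firstOdd (2 * n + 1) τ ∧ desEndO (2 * n + 1) τ + 1 = k then 1 else 0) := by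
  have hc := card_oddAscentSlots_add_desEndO τ
  have hfirst (p : Fin (2 * n + 2)) :
      firstEven (2 * n + 2) (insertMax τ p) ↔ p = 0 ∨ ¬firstOdd (2 * n + 1) τ := by
    rw [firstEven_iff_not_firstOdd, firstOdd_insertMax (hm := odd_two_mul_add_one n)]
    tauto
  by_cases hτ : firstOdd (2 * n + 1) τ
  · have h0 := (zero_mem_oddAscentSlots τ).2 hτ
    have hτ' : ¬firstEven (2 * n + 1) τ := by rwa [firstEven_iff_not_firstOdd, not_not]
    have hfib : ({p | firstEven (2 * n + 2) (insertMax τ p)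
        ∧ desEndO (2 * n + 2) (insertMax τ p) = k} : Finset (Fin (2 * n + 2)))
        = {p ∈ ({0} : Finset (Fin (2 * n + 2))) | desEndO (2 * n + 1) τ
            + (if p ∈ oddAscentSlots τ then 1 else 0) = k} := by
      ext p
      simp [hfirst, desEndO_insertMax, hτ]
    rw [hfib, card_filter_add_ite_mem_eq,
      sdiff_eq_empty_iff_subset.2 (singleton_subset_iff.2 h0), singleton_inter_of_mem h0]
    simp [hτ, hτ']
  · have hτ' : firstEven (2 * n + 1) τ := (firstEven_iff_not_firstOdd τ).2 hτ
    have hfib : ({p | firstEven (2 * n + 2) (insertMax τ p)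
        ∧ desEndO (2 * n + 2) (insertMax τ p) = k} : Finset (Fin (2 * n + 2)))
        = ({p | desEndO (2 * n + 1) τ + (if p ∈ oddAscentSlots τ then 1 else 0) = k} :
            Finset (Fin (2 * n + 2))) := by
      ext p
      simp [hfirst, desEndO_insertMax, hτ]
    rw [hfib, card_filter_add_ite_mem_eq, ← compl_eq_univ_sdiff, card_compl, univ_inter]
    simp only [hτ, hτ', true_and, false_and, if_false, add_zero, Fintype.card_fin]
    split_ifs <;> push_cast [*] <;> omega

end fibres

theorem Q0_two_mul_add_two (n k : ℕ) :
    (Q0 k (2 * n + 2) : ℤ) = ((n : ℤ) + k + 1) * Q0 k (2 * n + 1)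
      + ((n : ℤ) - k + 2) * (if k = 0 then 0 else (Q0 (k - 1) (2 * n + 1) : ℤ))
      + (if k = 0 then 0 else (Q1 (k - 1) (2 * n + 1) : ℤ)) := by
  rw [Q0, card_filter_perm_succ, Nat.cast_sum,
    sum_congr rfl fun τ _ => card_firstEven_insertMax τ k]
  simp only [sum_add_distrib, sum_ite_eq_mul_card, card_filter_and_add_one_eq, Q0, Q1,
    Nat.cast_ite, Nat.cast_zero]
  split_ifs <;> ring

theorem Q1_two_mul_add_two (n k : ℕ) :
    (Q1 k (2 * n + 2) : ℤ) = ((n : ℤ) + k + 1) * Q1 k (2 * n + 1)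
      + ((n : ℤ) - k + 1) * (if k = 0 then 0 else (Q1 (k - 1) (2 * n + 1) : ℤ)) := by
  rw [Q1, card_filter_perm_succ, Nat.cast_sum,
    sum_congr rfl fun τ _ => card_firstOdd_insertMax τ k]
  simp only [sum_add_distrib, sum_ite_eq_mul_card, card_filter_and_add_one_eq, Q1,
    Nat.cast_ite, Nat.cast_zero]
  split_ifs <;> ring

theorem stmt_13_general (n k : ℕ) :
    (Q0 k (2*n+2) : ℤ) = ((n : ℤ) + k + 1) * Q0 k (2*n+1)
        + ((n : ℤ) - k + 2) * (if k = 0 then 0 else (Q0 (k-1) (2*n+1) : ℤ))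
        + (if k = 0 then 0 else (Q1 (k-1) (2*n+1) : ℤ)) ∧
    (Q1 k (2*n+2) : ℤ) = ((n : ℤ) + k + 1) * Q1 k (2*n+1)
        + ((n : ℤ) - k + 1) * (if k = 0 then 0 else (Q1 (k-1) (2*n+1) : ℤ)) :=
  ⟨Q0_two_mul_add_two n k, Q1_two_mul_add_two n k⟩

theorem stmt_13 (n k : ℕ) (hn : 1 ≤ n) :
    (Q0 k (2*n+2) : ℤ) = ((n : ℤ) + k + 1) * Q0 k (2*n+1)
        + ((n : ℤ) - k + 2) * (if k = 0 then 0 else (Q0 (k-1) (2*n+1) : ℤ))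
        + (if k = 0 then 0 else (Q1 (k-1) (2*n+1) : ℤ)) ∧
    (Q1 k (2*n+2) : ℤ) = ((n : ℤ) + k + 1) * Q1 k (2*n+1)
        + ((n : ℤ) - k + 1) * (if k = 0 then 0 else (Q1 (k-1) (2*n+1) : ℤ)) :=
  stmt_13_general n k

end DescentParity
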